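/- For positive integers m, n and positive reals a, b with a ≠ b in general, ∫_0^∞ t^{m-1} e^{-at} Γ(n, bt) dt = Γ(n)·Γ(m)/a^m · [1 - (b/(a+b))^n ∑_{j=0}^{m-1} C(n+j-1, j)(a/(a+b))^j]; in particular the integral converges and is finite. -/

import Mathlib

/-!
For a positive integer `n`, the upper incomplete gamma function is elementary:
`Γ(n, x) = (n-1)! e^{-x} ∑_{k<n} x^k / k!`. Substituting this turns the integrand into a finite
combination of `t^{m-1+k} e^{-(a+b)t}`, whose integrals are ordinary Gamma integrals, so with
`p = a/(a+b)` and `q = b/(a+b)` the integral equals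
`(n-1)! (m-1)!/a^m · p^m ∑_{k<n} C(m-1+k, k) q^k`. The stated form then follows from the identity
`p^m ∑_{k<n} C(m-1+k, k) q^k + q^n ∑_{j<m} C(n-1+j, j) p^j = 1` for `p + q = 1`: the two sums are
the probabilities that `m` successes come before `n` failures in Bernoulli trials, or the reverse.
-/

open MeasureTheory Real Set Finset Filter Topology
open scoped Nat

lemma integrableOn_pow_mul_exp_neg_mul (k : ℕ) {c : ℝ} (hc : 0 < c) (x : ℝ) :
    IntegrableOn (fun t : ℝ => t ^ k * exp (-(c * t))) (Ioi x) := by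
  refine integrable_of_isBigO_exp_neg (half_pos hc) (by fun_prop) (Asymptotics.IsLittleO.isBigO ?_)
  refine Asymptotics.isLittleO_of_tendsto (fun y h => absurd h (exp_ne_zero _)) ?_
  refine (tendsto_rpow_mul_exp_neg_mul_atTop_nhds_zero k (c / 2) (half_pos hc)).congr' ?_
  filter_upwards with t
  rw [rpow_natCast, mul_div_assoc, ← exp_sub]
  ring_nf

lemma integral_pow_mul_exp_neg_mul_Ioi (k : ℕ) {c : ℝ} (hc : 0 < c) :
    ∫ t in Ioi (0 : ℝ), t ^ k * exp (-(c * t)) = k ! / c ^ (k + 1) := by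
  have h := integral_rpow_mul_exp_neg_mul_Ioi (a := k + 1) (by positivity) hc
  simp only [add_sub_cancel_right, rpow_natCast] at h
  rw [h, Gamma_nat_eq_factorial, ← Nat.cast_add_one, rpow_natCast, div_pow, one_pow,
    one_div_mul_eq_div]

lemma hasDerivAt_sum_pow_div_factorial (N : ℕ) (x : ℝ) :
    HasDerivAt (fun y : ℝ => ∑ k ∈ range (N + 1), y ^ k / k !)
      (∑ k ∈ range N, x ^ k / k !) x := by
  induction N with
  | zero => simpa using hasDerivAt_const x (1 : ℝ)
  | succ N ih =>
    simp_rw [sum_range_succ _ (N + 1)]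
    rw [sum_range_succ]
    refine ih.add (((hasDerivAt_pow (N + 1) x).div_const _).congr_deriv ?_)
    rw [Nat.add_sub_cancel, Nat.factorial_succ, Nat.cast_mul]
    field_simp

lemma integral_Ioi_pow_mul_exp_neg (N : ℕ) (x : ℝ) :
    ∫ s in Ioi x, s ^ N * exp (-s) = N ! * ((∑ k ∈ range (N + 1), x ^ k / k !) * exp (-x)) := by
  set S : ℝ → ℝ := fun y => ∑ k ∈ range (N + 1), y ^ k / (k ! : ℝ)
  have hderiv : ∀ y : ℝ, HasDerivAt (fun y => -(N ! * (S y * exp (-y)))) (y ^ N * exp (-y)) y := by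
    intro y
    refine ((((hasDerivAt_sum_pow_div_factorial N y).fun_mul
      (hasDerivAt_neg y).exp).const_mul (N ! : ℝ)).fun_neg).congr_deriv ?_
    rw [sum_range_succ]
    field_simp
    ring
  have hlim : Tendsto (fun y => -(N ! * (S y * exp (-y)))) atTop (𝓝 0) := by
    have hterm : ∀ k ∈ range (N + 1),
        Tendsto (fun y : ℝ => y ^ k * exp (-y) / k !) atTop (𝓝 0) := fun k _ => by
      simpa using (tendsto_pow_mul_exp_neg_atTop_nhds_zero k).div_const (k ! : ℝ)
    simpa [S, sum_mul, div_mul_eq_mul_div] using ((tendsto_finsetSum _ hterm).const_mul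
      (N ! : ℝ)).neg
  have hint : IntegrableOn (fun s : ℝ => s ^ N * exp (-s)) (Ioi x) := by
    simpa using integrableOn_pow_mul_exp_neg_mul N one_pos x
  rw [integral_Ioi_of_hasDerivAt_of_tendsto' (fun y _ => hderiv y) hint hlim]
  ring

section BernoulliRace

variable {p q : ℝ}

lemma mul_sum_succ_choose_mul_pow (hpq : p + q = 1) (N M : ℕ) :
    q * ∑ j ∈ range (M + 1), ((N + 1 + j).choose j : ℝ) * p ^ j
      = ∑ j ∈ range (M + 1), ((N + j).choose j : ℝ) * p ^ j
        - (N + M + 1).choose M * p ^ (M + 1) := by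
  induction M with
  | zero =>
    simp only [zero_add, range_one, sum_singleton, add_zero, Nat.choose_zero_right, Nat.cast_one,
      pow_zero, mul_one, pow_one, one_mul]
    linarith
  | succ M ih =>
    have pascal : ((N + M + 1 + 1).choose (M + 1) : ℝ)
        = (N + M + 1).choose M + (N + M + 1).choose (M + 1) := by
      rw [Nat.choose_succ_succ', Nat.cast_add]
    rw [sum_range_succ, sum_range_succ _ (M + 1), mul_add, ih,
      show N + 1 + (M + 1) = N + M + 1 + 1 by ring, show N + (M + 1) = N + M + 1 by ring, pascal]
    linear_combination ((N + M + 1).choose M + (N + M + 1).choose (M + 1) : ℝ)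
      * p ^ (M + 1) * hpq

lemma pow_mul_sum_choose_add_pow_mul_sum_choose (hpq : p + q = 1) (M N : ℕ) :
    p ^ (M + 1) * ∑ k ∈ range (N + 1), ((M + k).choose k : ℝ) * q ^ k
      + q ^ (N + 1) * ∑ j ∈ range (M + 1), ((N + j).choose j : ℝ) * p ^ j = 1 := by
  induction N with
  | zero =>
    simp only [zero_add, range_one, sum_singleton, Nat.choose_self, Nat.choose_zero_right,
      Nat.cast_one, one_mul, pow_zero, mul_one, pow_one]
    linear_combination (-1 : ℝ) * geom_sum_mul p (M + 1) + (∑ j ∈ range (M + 1), p ^ j) * hpq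
  | succ N ih =>
    have hsymm : ((M + (N + 1)).choose (N + 1) : ℝ) = (N + M + 1).choose M := by
      rw [← Nat.choose_symm_add, show M + (N + 1) = N + M + 1 by ring]
    rw [sum_range_succ, pow_succ q (N + 1), mul_assoc, mul_sum_succ_choose_mul_pow hpq, hsymm]
    linear_combination ih

end BernoulliRace

section UpperGammaTransform

variable {a b : ℝ}

lemma pow_mul_exp_neg_mul_mul_integral_Ioi_eq_sum (M N : ℕ) (t : ℝ) :
    t ^ M * exp (-(a * t)) * ∫ s in Ioi (b * t), s ^ N * exp (-s)
      = ∑ k ∈ range (N + 1), N ! * b ^ k / k ! * (t ^ (M + k) * exp (-((a + b) * t))) := by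
  have hexp : exp (-((a + b) * t)) = exp (-(a * t)) * exp (-(b * t)) := by
    rw [← exp_add]; ring_nf
  rw [integral_Ioi_pow_mul_exp_neg, sum_mul, mul_sum, mul_sum]
  refine sum_congr rfl fun k _ => ?_
  rw [hexp, mul_pow, pow_add]
  ring

lemma integrableOn_pow_mul_exp_neg_mul_mul_integral_Ioi (M N : ℕ) (hab : 0 < a + b) :
    IntegrableOn (fun t => t ^ M * exp (-(a * t)) * ∫ s in Ioi (b * t), s ^ N * exp (-s))
      (Ioi 0) := by
  simp_rw [pow_mul_exp_neg_mul_mul_integral_Ioi_eq_sum]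
  exact integrable_finsetSum _ fun k _ =>
    (integrableOn_pow_mul_exp_neg_mul (M + k) hab 0).const_mul _

lemma integral_pow_mul_exp_neg_mul_mul_integral_Ioi (M N : ℕ) (hab : 0 < a + b) :
    ∫ t in Ioi (0 : ℝ), t ^ M * exp (-(a * t)) * ∫ s in Ioi (b * t), s ^ N * exp (-s)
      = N ! * M ! * ∑ k ∈ range (N + 1), (M + k).choose k * b ^ k / (a + b) ^ (M + k + 1) := by
  simp_rw [pow_mul_exp_neg_mul_mul_integral_Ioi_eq_sum]
  rw [integral_finsetSum _ fun k _ =>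
    (integrableOn_pow_mul_exp_neg_mul (M + k) hab 0).const_mul _, mul_sum]
  refine sum_congr rfl fun k _ => ?_
  rw [integral_const_mul, integral_pow_mul_exp_neg_mul_Ioi _ hab,
    ← Nat.add_choose_mul_factorial_mul_factorial M k]
  push_cast
  field_simp

end UpperGammaTransform

/-- For positive integers `m`, `n` and `a, b > 0`,
`∫_0^∞ t^{m-1} e^{-at} Γ(n, bt) dt
  = Γ(n)Γ(m)/a^m [1 - (b/(a+b))^n ∑_{j=0}^{m-1} C(n+j-1, j)(a/(a+b))^j]`,
and in particular the integral converges. -/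
theorem integral_poly_exp_upperGamma (a b : ℝ) (ha : 0 < a) (hb : 0 < b)
    (m n : ℕ) (hm : 0 < m) (hn : 0 < n) :
    (∫ t in Ioi (0:ℝ), t ^ (m - 1) * Real.exp (-(a * t)) *
        ∫ s in Ioi (b * t), s ^ (n - 1) * Real.exp (-s)) =
      (Nat.factorial (n - 1) : ℝ) * (Nat.factorial (m - 1)) / a ^ m *
        (1 - (b / (a + b)) ^ n *
          ∑ j ∈ Finset.range m, (Nat.choose (n + j - 1) j : ℝ) * (a / (a + b)) ^ j) ∧
    IntegrableOn
      (fun t : ℝ => t ^ (m - 1) * Real.exp (-(a * t)) *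
        ∫ s in Ioi (b * t), s ^ (n - 1) * Real.exp (-s)) (Ioi 0) := by
  obtain ⟨M, rfl⟩ := Nat.exists_eq_add_one_of_ne_zero hm.ne'
  obtain ⟨N, rfl⟩ := Nat.exists_eq_add_one_of_ne_zero hn.ne'
  have hab : 0 < a + b := by positivity
  refine ⟨?_, integrableOn_pow_mul_exp_neg_mul_mul_integral_Ioi M N hab⟩
  have hpq : a / (a + b) + b / (a + b) = 1 := by field_simp
  have hsum := pow_mul_sum_choose_add_pow_mul_sum_choose hpq M N
  simp only [Nat.add_right_comm N 1, Nat.add_sub_cancel]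
  rw [integral_pow_mul_exp_neg_mul_mul_integral_Ioi M N hab, ← eq_sub_of_add_eq hsum, mul_sum,
    mul_sum, mul_sum]
  refine sum_congr rfl fun k _ => ?_
  rw [div_pow, div_pow]
  field_simp
  ring
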